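/- arXiv:2103.10536 — 7 statements merged into one kernel-verified Lean document; each statement's English description precedes it below -/
import Mathlib

section
/- Let v be a submodular set function on a finite ground set G and let V be its multilinear extension. Then V is concave along any line with nonnegative direction: for all x ∈ [0,1]^G, all d ∈ ℝ^G with d ≥ 0 componentwise, all s, t ≥ 0 with x + s·d, x + t·d ∈ [0,1]^G, and all λ ∈ [0,1], V(x + (λs + (1−λ)t)·d) ≥ λ·V(x + s·d) + (1−λ)·V(x + t·d). -/
open Finset

/-- A set function `v` on a finite ground set is submodular if
`v(S ∩ T) + v(S ∪ T) ≤ v(S) + v(T)` for all `S, T`. -/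
def Submodular {G : Type*} [DecidableEq G] (v : Finset G → ℝ) : Prop :=
  ∀ S T : Finset G, v (S ∩ T) + v (S ∪ T) ≤ v S + v T

/-- The multilinear extension of a set function `v` on a finite ground set `G`. -/
noncomputable def multilinear {G : Type*} [Fintype G] [DecidableEq G]
    (v : Finset G → ℝ) (x : G → ℝ) : ℝ :=
  ∑ S : Finset G, v S * ((∏ j ∈ S, x j) * ∏ j ∈ Sᶜ, (1 - x j))

/-
Along the line `u ↦ y(u) = x + u • d` the multilinear extension is a polynomial
`φ(u) = ∑_S v(S) ∏_k w_{S,k}(u)` whose factors are affine in `u`, so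
`φ'' = ∑_{i ≠ j} dᵢ dⱼ ∂ᵢ∂ⱼV(y)`. Splitting the sum defining `∂ᵢ∂ⱼV(y)` according to
`T = S \ {i, j}`, the four sets `T, T ∪ {i}, T ∪ {j}, T ∪ {i, j}` share the same weight
`∏_{k ≠ i, j} w_{T,k} ≥ 0` and contribute it times
`v(T) - v(T ∪ {i}) - v(T ∪ {j}) + v(T ∪ {i, j}) ≤ 0` by submodularity. Hence `φ'' ≤ 0` on
the convex set of parameters with `y(u) ∈ [0,1]^G`, and `φ` is concave there.
-/

section ProdDeriv

variable {ι : Type*} [DecidableEq ι] {f : ι → ℝ → ℝ} {c : ι → ℝ}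

theorem hasDerivAt_prod_of_hasDerivAt_const (hf : ∀ k u, HasDerivAt (f k) (c k) u)
    (s : Finset ι) (u : ℝ) :
    HasDerivAt (fun u => ∏ k ∈ s, f k u) (∑ i ∈ s, (∏ k ∈ s.erase i, f k u) * c i) u := by
  simpa only [smul_eq_mul] using HasDerivAt.fun_finsetProd fun k (_ : k ∈ s) => hf k u

theorem hasDerivAt_sum_prod_erase_of_hasDerivAt_const (hf : ∀ k u, HasDerivAt (f k) (c k) u)
    (s : Finset ι) (u : ℝ) :
    HasDerivAt (fun u => ∑ i ∈ s, (∏ k ∈ s.erase i, f k u) * c i)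
      (∑ i ∈ s, (∑ j ∈ s.erase i, (∏ k ∈ (s.erase i).erase j, f k u) * c j) * c i) u :=
  HasDerivAt.fun_sum fun i _ =>
    (hasDerivAt_prod_of_hasDerivAt_const hf (s.erase i) u).mul_const (c i)

end ProdDeriv

lemma convex_setOf_line_mem_cube {G : Type*} (x d : G → ℝ) :
    Convex ℝ {u : ℝ | ∀ j, 0 ≤ x j + u * d j ∧ x j + u * d j ≤ 1} := by
  intro a ha b hb μ ν hμ hν hμν j
  have hcomb : x j + (μ • a + ν • b) * d j = μ * (x j + a * d j) + ν * (x j + b * d j) := by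
    simp only [smul_eq_mul]
    linear_combination (x j) * hμν.symm
  rw [hcomb]
  constructor <;> nlinarith [ha j, hb j]

section Multilinear

variable {G : Type*} [DecidableEq G]

/-- `∏ k, cubeWeight S y k` is the probability that the random set containing each `k`
independently with probability `y k` is `S`. -/
def cubeWeight (S : Finset G) (y : G → ℝ) (k : G) : ℝ :=
  if k ∈ S then y k else 1 - y k

def memSign (S : Finset G) (k : G) : ℝ :=
  if k ∈ S then 1 else -1

lemma cubeWeight_nonneg {y : G → ℝ} (hy : ∀ k, 0 ≤ y k ∧ y k ≤ 1) (S : Finset G) (k : G) :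
    0 ≤ cubeWeight S y k := by
  unfold cubeWeight
  split_ifs
  · exact (hy k).1
  · linarith [(hy k).2]

lemma prod_cubeWeight_insert {R : Finset G} {a : G} (ha : a ∉ R) (S : Finset G) (y : G → ℝ) :
    ∏ k ∈ R, cubeWeight (insert a S) y k = ∏ k ∈ R, cubeWeight S y k :=
  prod_congr rfl fun k hk => by
    simp only [cubeWeight, mem_insert, show k ≠ a from fun h => ha (h ▸ hk), false_or]

lemma hasDerivAt_cubeWeight_line (S : Finset G) (x d : G → ℝ) (k : G) (u : ℝ) :
    HasDerivAt (fun u => cubeWeight S (fun j => x j + u * d j) k) (memSign S k * d k) u := by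
  have hline : HasDerivAt (fun u => x k + u * d k) (d k) u :=
    (hasDerivAt_mul_const (d k)).const_add (x k)
  unfold cubeWeight memSign
  split_ifs
  · simpa using hline
  · simpa using hline.const_sub 1

lemma multilinear_eq_sum_prod_cubeWeight [Fintype G] (v : Finset G → ℝ) (y : G → ℝ) :
    multilinear v y = ∑ S, v S * ∏ k, cubeWeight S y k := by
  unfold multilinear cubeWeight
  refine sum_congr rfl fun S _ => ?_
  rw [prod_ite, filter_mem_eq_inter, filter_notMem_eq_sdiff, univ_inter, compl_eq_univ_sdiff]

lemma Submodular.add_insert_insert_le {v : Finset G → ℝ} (hsub : Submodular v) {i j : G}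
    (hij : i ≠ j) (T : Finset G) :
    v T + v (insert i (insert j T)) ≤ v (insert i T) + v (insert j T) := by
  have hinter : insert i T ∩ insert j T = T := by
    ext a; simp only [mem_inter, mem_insert]; grind
  have hunion : insert i T ∪ insert j T = insert i (insert j T) := by
    ext a; simp only [mem_union, mem_insert]; tauto
  simpa [hinter, hunion] using hsub (insert i T) (insert j T)

lemma sum_finset_univ_eq_sum_powerset_erase_erase [Fintype G] {i j : G} (hij : i ≠ j)
    (g : Finset G → ℝ) :
    ∑ S, g S = ∑ T ∈ ((univ.erase i).erase j).powerset,
      (g T + g (insert j T) + (g (insert i T) + g (insert i (insert j T)))) := by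
  have hj : j ∉ (univ.erase i).erase j := notMem_erase _ _
  have hi : i ∉ insert j ((univ.erase i).erase j) := by simp [hij]
  have huniv : (univ : Finset G) = insert i (insert j ((univ.erase i).erase j)) := by
    rw [insert_erase (mem_erase.mpr ⟨hij.symm, mem_univ j⟩), insert_erase (mem_univ i)]
  conv_lhs => rw [← powerset_univ, huniv]
  rw [sum_powerset_insert hi, sum_powerset_insert hj,
    sum_powerset_insert hj, ← sum_add_distrib, ← sum_add_distrib, ← sum_add_distrib]

/-- For `i ≠ j` this is the mixed partial derivative `∂²V / ∂yᵢ ∂yⱼ` of the multilinear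
extension `V` of `v`. -/
noncomputable def mixedPartial [Fintype G] (v : Finset G → ℝ) (y : G → ℝ) (i j : G) : ℝ :=
  ∑ S, v S * (memSign S i * memSign S j * ∏ k ∈ (univ.erase i).erase j, cubeWeight S y k)

lemma mixedPartial_nonpos [Fintype G] {v : Finset G → ℝ} (hsub : Submodular v) {y : G → ℝ}
    (hy : ∀ k, 0 ≤ y k ∧ y k ≤ 1) {i j : G} (hij : i ≠ j) :
    mixedPartial v y i j ≤ 0 := by
  unfold mixedPartial
  rw [sum_finset_univ_eq_sum_powerset_erase_erase hij]
  refine sum_nonpos fun T hT => ?_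
  have hiR : i ∉ (univ.erase i).erase j := fun h => (mem_erase.mp (mem_of_mem_erase h)).1 rfl
  have hjR : j ∉ (univ.erase i).erase j := notMem_erase _ _
  have hiT : i ∉ T := fun h => hiR (mem_powerset.mp hT h)
  have hjT : j ∉ T := fun h => hjR (mem_powerset.mp hT h)
  set P := ∏ k ∈ (univ.erase i).erase j, cubeWeight T y k
  have hP : 0 ≤ P := prod_nonneg fun k _ => cubeWeight_nonneg hy T k
  simp only [prod_cubeWeight_insert hiR, prod_cubeWeight_insert hjR, memSign, mem_insert,
    hiT, hjT, hij, hij.symm, or_false, or_true, if_true, if_false]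
  nlinarith [hsub.add_insert_insert_le hij T]

lemma concaveOn_multilinear_line [Fintype G] {v : Finset G → ℝ} (hsub : Submodular v)
    (x : G → ℝ) {d : G → ℝ} (hd : ∀ j, 0 ≤ d j) :
    ConcaveOn ℝ {u : ℝ | ∀ j, 0 ≤ x j + u * d j ∧ x j + u * d j ≤ 1}
      (fun u => multilinear v (fun j => x j + u * d j)) := by
  have hw := hasDerivAt_cubeWeight_line (x := x) (d := d)
  have h1 := fun u => HasDerivAt.fun_sum fun S (_ : S ∈ univ) =>
    (hasDerivAt_prod_of_hasDerivAt_const (hw S) univ u).const_mul (v S)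
  have h2 := fun u => HasDerivAt.fun_sum fun S (_ : S ∈ univ) =>
    (hasDerivAt_sum_prod_erase_of_hasDerivAt_const (hw S) univ u).const_mul (v S)
  simp_rw [multilinear_eq_sum_prod_cubeWeight]
  refine concaveOn_of_hasDerivWithinAt2_nonpos (convex_setOf_line_mem_cube x d)
    (fun u _ => (h1 u).continuousAt.continuousWithinAt) (fun u _ => (h1 u).hasDerivWithinAt)
    (fun u _ => (h2 u).hasDerivWithinAt) fun u hu => ?_
  set y : G → ℝ := fun j => x j + u * d j
  have hy : ∀ k, 0 ≤ y k ∧ y k ≤ 1 := interior_subset hu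
  calc _ = ∑ i, ∑ j ∈ univ.erase i, d i * d j * mixedPartial v y i j := by
        simp only [mixedPartial, mul_sum, sum_mul]
        rw [sum_comm]
        refine sum_congr rfl fun i _ => ?_
        rw [sum_comm]
        refine sum_congr rfl fun j _ => sum_congr rfl fun S _ => by ring
    _ ≤ 0 := sum_nonpos fun i _ => sum_nonpos fun j hj =>
        mul_nonpos_of_nonneg_of_nonpos (mul_nonneg (hd i) (hd j))
          (mixedPartial_nonpos hsub hy (ne_of_mem_erase hj).symm)

end Multilinear

theorem multilinear_concave_of_submodular_general {G : Type*} [Fintype G] [DecidableEq G]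
    (v : Finset G → ℝ) (hsub : Submodular v)
    (x d : G → ℝ) (hd : ∀ j, 0 ≤ d j)
    (s t : ℝ)
    (hxs : ∀ j, 0 ≤ x j + s * d j ∧ x j + s * d j ≤ 1)
    (hxt : ∀ j, 0 ≤ x j + t * d j ∧ x j + t * d j ≤ 1)
    (lam : ℝ) (hlam0 : 0 ≤ lam) (hlam1 : lam ≤ 1) :
    lam * multilinear v (fun j => x j + s * d j)
      + (1 - lam) * multilinear v (fun j => x j + t * d j)
    ≤ multilinear v (fun j => x j + (lam * s + (1 - lam) * t) * d j) :=
  (concaveOn_multilinear_line hsub x hd).2 hxs hxt hlam0 (sub_nonneg.mpr hlam1) (by ring)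

/-- if `v` is submodular, then its multilinear extension is concave along
any line with nonnegative direction. -/
theorem multilinear_concave_of_submodular {G : Type*} [Fintype G] [DecidableEq G]
    (v : Finset G → ℝ) (hsub : Submodular v)
    (x d : G → ℝ) (hd : ∀ j, 0 ≤ d j)
    (hx : ∀ j, 0 ≤ x j ∧ x j ≤ 1)
    (s t : ℝ) (hs : 0 ≤ s) (ht : 0 ≤ t)
    (hxs : ∀ j, 0 ≤ x j + s * d j ∧ x j + s * d j ≤ 1)
    (hxt : ∀ j, 0 ≤ x j + t * d j ∧ x j + t * d j ≤ 1)
    (lam : ℝ) (hlam0 : 0 ≤ lam) (hlam1 : lam ≤ 1) :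
    lam * multilinear v (fun j => x j + s * d j)
      + (1 - lam) * multilinear v (fun j => x j + t * d j)
    ≤ multilinear v (fun j => x j + (lam * s + (1 - lam) * t) * d j) :=
  multilinear_concave_of_submodular_general v hsub x d hd s t hxs hxt lam hlam0 hlam1
end

section
/- Let v be a monotone submodular set function on a finite ground set G with multilinear extension V. Then for all x, y ∈ [0,1]^G, ∑_{j∈G} y_j · ∂_j V(x) ≥ V(y) − V(x), where ∂_j V(x) denotes V(x with coordinate j set to 1) − V(x with coordinate j set to 0). -/
open Finset

/-!
`V x = ∑ S, bernoulliWeight x S * v S` is the expectation of `v R` for the random set `R` that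
contains each `j` independently with probability `x j`. Resampling coordinate `j` shows
`∂_j V x = 𝔼 [v (R ∪ {j}) - v (R \ {j})]`, and `y j = ℙ (j ∈ T)` for an independent random set
`T` drawn from `y`, so the right-hand side is `𝔼 [∑ j ∈ T, (v (R ∪ {j}) - v (R \ {j}))]`.
For fixed sets, monotonicity and a telescoping application of submodularity give
`v T - v R ≤ v (R ∪ T) - v R ≤ ∑ j ∈ T, (v (R ∪ {j}) - v R)
  ≤ ∑ j ∈ T, (v (R ∪ {j}) - v (R \ {j}))`, and taking expectations yields `V y - V x` on the left.
-/

theorem Finset.sum_powerset_eq_sum_powerset_erase_add_insert {α β : Type*} [DecidableEq α]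
    [AddCommMonoid β] {s : Finset α} {j : α} (hj : j ∈ s) (F : Finset α → β) :
    ∑ S ∈ s.powerset, F S = ∑ R ∈ (s.erase j).powerset, (F R + F (insert j R)) := by
  rw [← insert_erase hj, sum_powerset_insert (notMem_erase j s), erase_insert (notMem_erase j s),
    sum_add_distrib]

namespace SetFunction

variable {G : Type*} [Fintype G] [DecidableEq G]

noncomputable def bernoulliWeight (x : G → ℝ) (S : Finset G) : ℝ :=
  ∏ i, if i ∈ S then x i else 1 - x i

theorem bernoulliWeight_eq_prod_mul_prod_compl (x : G → ℝ) (S : Finset G) :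
    bernoulliWeight x S = (∏ i ∈ S, x i) * ∏ i ∈ Sᶜ, (1 - x i) := by
  rw [bernoulliWeight, prod_ite, filter_mem_eq_inter, univ_inter, ← compl_filter,
    filter_mem_eq_inter, univ_inter]

theorem multilinear_eq_sum_bernoulliWeight (v : Finset G → ℝ) (x : G → ℝ) :
    multilinear v x = ∑ S, bernoulliWeight x S * v S := by
  simp only [multilinear, bernoulliWeight_eq_prod_mul_prod_compl, mul_comm]

theorem bernoulliWeight_nonneg {x : G → ℝ} (hx : ∀ j, 0 ≤ x j ∧ x j ≤ 1) (S : Finset G) :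
    0 ≤ bernoulliWeight x S :=
  prod_nonneg fun i _ => by split_ifs <;> linarith [hx i]

theorem sum_bernoulliWeight (x : G → ℝ) : ∑ S, bernoulliWeight x S = 1 := by
  simp only [bernoulliWeight_eq_prod_mul_prod_compl, ← Fintype.prod_add, add_sub_cancel,
    prod_const_one]

theorem bernoulliWeight_of_notMem {j : G} {R : Finset G} (hj : j ∉ R) (x : G → ℝ) :
    bernoulliWeight x R = (1 - x j) * ∏ i ∈ univ.erase j, if i ∈ R then x i else 1 - x i := by
  rw [bernoulliWeight, ← mul_prod_erase _ _ (mem_univ j), if_neg hj]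

theorem bernoulliWeight_insert {j : G} {R : Finset G} (x : G → ℝ) :
    bernoulliWeight x (insert j R) = x j * ∏ i ∈ univ.erase j, if i ∈ R then x i else 1 - x i := by
  rw [bernoulliWeight, ← mul_prod_erase _ _ (mem_univ j), if_pos (mem_insert_self j R)]
  congr 1
  exact prod_congr rfl fun i hi => by simp only [mem_insert, ne_of_mem_erase hi, false_or]

/-- Resampling coordinate `j` of the random set as a `c`-coin: the random set for
`update x j c` is `insert j S` with probability `c` and `S.erase j` otherwise, `S` being the
random set for `x`. -/
theorem sum_bernoulliWeight_update_mul (x : G → ℝ) (j : G) (c : ℝ) (h : Finset G → ℝ) :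
    ∑ S, bernoulliWeight (Function.update x j c) S * h S =
      ∑ S, bernoulliWeight x S * ((1 - c) * h (S.erase j) + c * h (insert j S)) := by
  rw [← powerset_univ, sum_powerset_eq_sum_powerset_erase_add_insert (mem_univ j),
    sum_powerset_eq_sum_powerset_erase_add_insert (mem_univ j)]
  refine sum_congr rfl fun R hR => ?_
  have hjR : j ∉ R := fun h => notMem_erase j univ (mem_powerset.mp hR h)
  have hrest : (∏ i ∈ univ.erase j,
      if i ∈ R then Function.update x j c i else 1 - Function.update x j c i) =
        ∏ i ∈ univ.erase j, if i ∈ R then x i else 1 - x i :=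
    prod_congr rfl fun i hi => by rw [Function.update_of_ne (ne_of_mem_erase hi)]
  rw [bernoulliWeight_of_notMem hjR, bernoulliWeight_of_notMem hjR, bernoulliWeight_insert,
    bernoulliWeight_insert, hrest, Function.update_self, erase_eq_of_notMem hjR, insert_idem,
    erase_insert hjR]
  ring

theorem sum_bernoulliWeight_mul_sum_mem (x : G → ℝ) (f : G → ℝ) :
    ∑ S, bernoulliWeight x S * ∑ j ∈ S, f j = ∑ j, x j * f j := by
  have marginal : ∀ j, ∑ S, bernoulliWeight x S * (if j ∈ S then 1 else 0) = x j := fun j => by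
    have h := sum_bernoulliWeight_update_mul x j (x j) fun S => if j ∈ S then 1 else 0
    simp only [Function.update_eq_self, notMem_erase, mem_insert_self, if_true, if_false] at h
    rw [h, ← sum_mul, sum_bernoulliWeight]
    ring
  calc ∑ S, bernoulliWeight x S * ∑ j ∈ S, f j
      = ∑ S, ∑ j, bernoulliWeight x S * (if j ∈ S then 1 else 0) * f j :=
        sum_congr rfl fun S _ => by
          rw [← sum_ite_mem_eq, mul_sum]
          exact sum_congr rfl fun j _ => by split_ifs <;> ring
    _ = ∑ j, x j * f j := by rw [sum_comm]; simp only [← sum_mul, marginal]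

theorem multilinear_update_one_sub_update_zero (v : Finset G → ℝ) (x : G → ℝ) (j : G) :
    multilinear v (Function.update x j 1) - multilinear v (Function.update x j 0) =
      ∑ S, bernoulliWeight x S * (v (insert j S) - v (S.erase j)) := by
  simp only [multilinear_eq_sum_bernoulliWeight, sum_bernoulliWeight_update_mul, ← sum_sub_distrib]
  exact sum_congr rfl fun S _ => by ring

end SetFunction

section

variable {G : Type*} [DecidableEq G]

theorem Submodular.sub_le_sum_insert_sub {v : Finset G → ℝ} (hsub : Submodular v)
    (S T : Finset G) : v (S ∪ T) - v S ≤ ∑ j ∈ T, (v (insert j S) - v S) := by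
  induction T using Finset.induction_on with
  | empty => simp
  | @insert a U ha ih =>
    have hinter : insert a S ∩ (S ∪ U) = S := by
      ext i; simp only [mem_inter, mem_insert, mem_union]; grind
    have hunion : insert a S ∪ (S ∪ U) = S ∪ insert a U := by
      ext i; simp only [mem_insert, mem_union]; tauto
    have := hsub (insert a S) (S ∪ U)
    rw [hinter, hunion] at this
    rw [sum_insert ha]
    linarith

theorem Submodular.sub_le_sum_insert_sub_erase {v : Finset G → ℝ} (hmono : Monotone v)
    (hsub : Submodular v) (S T : Finset G) :
    v T - v S ≤ ∑ j ∈ T, (v (insert j S) - v (S.erase j)) :=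
  calc v T - v S ≤ v (S ∪ T) - v S := by linarith [hmono (subset_union_right : T ⊆ S ∪ T)]
    _ ≤ ∑ j ∈ T, (v (insert j S) - v S) := hsub.sub_le_sum_insert_sub S T
    _ ≤ ∑ j ∈ T, (v (insert j S) - v (S.erase j)) :=
      sum_le_sum fun j _ => by linarith [hmono (erase_subset j S)]

end

open SetFunction in
/-- for a monotone submodular `v` with multilinear extension `V`,
`∑_j y_j ∂_j V(x) ≥ V(y) − V(x)`, where
`∂_j V(x) = V(x with coordinate j set to 1) − V(x with coordinate j set to 0)`. -/
theorem gradient_inner_ge_diff {G : Type*} [Fintype G] [DecidableEq G]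
    (v : Finset G → ℝ) (hmono : Monotone v) (hsub : Submodular v)
    (x y : G → ℝ) (hx : ∀ j, 0 ≤ x j ∧ x j ≤ 1) (hy : ∀ j, 0 ≤ y j ∧ y j ≤ 1) :
    multilinear v y - multilinear v x ≤
      ∑ j : G, y j * (multilinear v (Function.update x j 1)
        - multilinear v (Function.update x j 0)) := by
  calc multilinear v y - multilinear v x
      = ∑ S, bernoulliWeight x S * ∑ T, bernoulliWeight y T * (v T - v S) := by
        simp only [mul_sub, sum_sub_distrib, ← sum_mul, sum_bernoulliWeight, one_mul,
          multilinear_eq_sum_bernoulliWeight]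
    _ ≤ ∑ S, bernoulliWeight x S *
          ∑ T, bernoulliWeight y T * ∑ j ∈ T, (v (insert j S) - v (S.erase j)) := by
      gcongr with S _ T _
      · exact bernoulliWeight_nonneg hx S
      · exact bernoulliWeight_nonneg hy T
      · exact hsub.sub_le_sum_insert_sub_erase hmono S T
    _ = ∑ j, y j * ∑ S, bernoulliWeight x S * (v (insert j S) - v (S.erase j)) := by
      simp_rw [sum_bernoulliWeight_mul_sum_mem, mul_sum]
      rw [sum_comm]
      exact sum_congr rfl fun _ _ => sum_congr rfl fun _ _ => by ring
    _ = _ := by simp only [multilinear_update_one_sub_update_zero]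
end

section
/- Let v be a submodular set function on a finite ground set G. Then for every S ⊆ G, ∑_{j∈S} (v(S) − v(S∖{j})) ≤ v(S) − v(∅). -/
/-! Submodularity gives diminishing marginal returns. Adding an element `a` to `S` contributes
exactly `v (insert a S) - v S` to the left side, while the marginals of the old elements can only
shrink, so induction on `S` telescopes to `v S - v ∅`. -/

open Finset

theorem Submodular.sub_erase_le_of_subset {G : Type*} [DecidableEq G] {v : Finset G → ℝ}
    (hv : Submodular v) {A B : Finset G} (hAB : A ⊆ B) {j : G} (hj : j ∈ A) :
    v B - v (B.erase j) ≤ v A - v (A.erase j) := by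
  have h := hv A (B.erase j)
  rw [inter_erase, inter_eq_left.mpr hAB, union_erase_of_mem hj, union_eq_right.mpr hAB] at h
  linarith

theorem sum_marginals_le_of_submodular_general {G : Type*} [DecidableEq G]
    (v : Finset G → ℝ) (hsub : Submodular v) (S : Finset G) :
    ∑ j ∈ S, (v S - v (S.erase j)) ≤ v S - v ∅ := by
  induction S using Finset.induction_on with
  | empty => simp
  | @insert a S ha ih =>
    rw [sum_insert ha, erase_insert ha]
    have hmarg : ∑ j ∈ S, (v (insert a S) - v ((insert a S).erase j))
        ≤ ∑ j ∈ S, (v S - v (S.erase j)) :=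
      sum_le_sum fun j hj => hsub.sub_erase_le_of_subset (subset_insert a S) hj
    linarith

/-- for a submodular `v` and every `S ⊆ G`,
`∑_{j∈S} (v(S) − v(S∖{j})) ≤ v(S) − v(∅)`. -/
theorem sum_marginals_le_of_submodular {G : Type*} [Fintype G] [DecidableEq G]
    (v : Finset G → ℝ) (hsub : Submodular v) (S : Finset G) :
    ∑ j ∈ S, (v S - v (S.erase j)) ≤ v S - v ∅ :=
  sum_marginals_le_of_submodular_general v hsub S
end

section
/- Let v be a nonnegative monotone submodular set function on a finite ground set G with multilinear extension V. Then for all x, y ∈ [0,1]^G with x + y ∈ [0,1]^G componentwise, V(x + y) ≤ V(x) + ∑_{j∈G} y_j · v({j}). -/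
/-!
The multilinear extension is affine in each coordinate, and its slope in coordinate `j` is the
expected marginal gain `v (S ∪ {j}) - v S` of a random set `S ∌ j`; by submodularity that gain is at
most `v {j} - v ∅ ≤ v {j}`. Raising the coordinates from `x` to `x + y` one at a time therefore
increases `V` by at most `y j * v {j}` at each step.
-/

open Finset

section

variable {G : Type*} [DecidableEq G]

/-- The probability that a random subset of `s`, containing each `i` independently with
probability `z i`, equals `S`. -/
def subsetProb (s : Finset G) (z : G → ℝ) (S : Finset G) : ℝ :=
  (∏ i ∈ S, z i) * ∏ i ∈ s \ S, (1 - z i)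

lemma subsetProb_nonneg (s : Finset G) {z : G → ℝ} (hz : ∀ i, 0 ≤ z i ∧ z i ≤ 1)
    (S : Finset G) : 0 ≤ subsetProb s z S :=
  mul_nonneg (prod_nonneg fun i _ => (hz i).1) (prod_nonneg fun i _ => sub_nonneg.2 (hz i).2)

lemma sum_subsetProb (s : Finset G) (z : G → ℝ) :
    ∑ S ∈ s.powerset, subsetProb s z S = 1 := by
  simpa only [subsetProb, add_sub_cancel, prod_const_one] using (prod_add z (1 - z ·) s).symm

lemma Submodular.insert_sub_le {v : Finset G → ℝ} (hsub : Submodular v) {S : Finset G} {j : G}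
    (hj : j ∉ S) : v (insert j S) - v S ≤ v {j} - v ∅ := by
  have := hsub S {j}
  rw [inter_singleton_of_notMem hj, union_comm, ← insert_eq] at this
  linarith

variable [Fintype G]

lemma multilinear_update (v : Finset G → ℝ) (z : G → ℝ) (j : G) (c : ℝ) :
    multilinear v (Function.update z j c) =
      ∑ S ∈ (univ.erase j).powerset,
        ((1 - c) * v S + c * v (insert j S)) * subsetProb (univ.erase j) z S := by
  have hj : j ∉ univ.erase j := notMem_erase j univ
  have huniv : (univ : Finset (Finset G)) = (insert j (univ.erase j)).powerset := by
    rw [insert_erase (mem_univ j), powerset_univ]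
  rw [multilinear, huniv, sum_powerset_insert hj, ← sum_add_distrib]
  refine sum_congr rfl fun S hS => ?_
  have hjS : j ∉ S := fun h => hj (mem_powerset.1 hS h)
  have hcompl : Sᶜ.erase j = univ.erase j \ S := by ext; simp [and_comm]
  have hS_prod : ∏ i ∈ S, Function.update z j c i = ∏ i ∈ S, z i :=
    prod_congr rfl fun i hi => Function.update_of_ne (ne_of_mem_of_not_mem hi hjS) _ _
  have hrest : ∏ i ∈ Sᶜ.erase j, (1 - Function.update z j c i) = ∏ i ∈ Sᶜ.erase j, (1 - z i) :=
    prod_congr rfl fun i hi => by rw [Function.update_of_ne (mem_erase.1 hi).1]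
  rw [prod_insert hjS, compl_insert, hS_prod, hrest,
    ← mul_prod_erase _ _ (mem_compl.2 hjS), hrest, Function.update_self, hcompl, subsetProb]
  ring

lemma multilinear_update_sub_update (v : Finset G → ℝ) (z : G → ℝ) (j : G) (a b : ℝ) :
    multilinear v (Function.update z j a) - multilinear v (Function.update z j b) =
      (a - b) * ∑ S ∈ (univ.erase j).powerset,
        (v (insert j S) - v S) * subsetProb (univ.erase j) z S := by
  rw [multilinear_update, multilinear_update, ← sum_sub_distrib, mul_sum]
  exact sum_congr rfl fun S _ => by ring

lemma multilinear_update_le {v : Finset G → ℝ} (hsub : Submodular v) {z : G → ℝ}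
    (hz : ∀ i, 0 ≤ z i ∧ z i ≤ 1) (j : G) {a b : ℝ} (hba : b ≤ a) :
    multilinear v (Function.update z j a) ≤
      multilinear v (Function.update z j b) + (a - b) * (v {j} - v ∅) := by
  have hslope : ∑ S ∈ (univ.erase j).powerset,
      (v (insert j S) - v S) * subsetProb (univ.erase j) z S ≤ v {j} - v ∅ :=
    calc _ ≤ ∑ S ∈ (univ.erase j).powerset, (v {j} - v ∅) * subsetProb (univ.erase j) z S :=
          sum_le_sum fun S hS => mul_le_mul_of_nonneg_right
            (hsub.insert_sub_le fun h => notMem_erase j univ (mem_powerset.1 hS h))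
            (subsetProb_nonneg _ hz S)
      _ = v {j} - v ∅ := by rw [← mul_sum, sum_subsetProb, mul_one]
  linarith [multilinear_update_sub_update v z j a b,
    mul_le_mul_of_nonneg_left hslope (sub_nonneg.2 hba)]

lemma multilinear_piecewise_le {v : Finset G → ℝ} (hsub : Submodular v) {x y : G → ℝ}
    (hx : ∀ j, 0 ≤ x j ∧ x j ≤ 1) (hy : ∀ j, 0 ≤ y j)
    (hxy : ∀ j, 0 ≤ x j + y j ∧ x j + y j ≤ 1) (A : Finset G) :
    multilinear v (A.piecewise (x + y) x) ≤
      multilinear v x + ∑ j ∈ A, y j * (v {j} - v ∅) := by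
  induction A using Finset.induction_on with
  | empty => simp
  | @insert j A hjA ih =>
    have hbox : ∀ i, 0 ≤ A.piecewise (x + y) x i ∧ A.piecewise (x + y) x i ≤ 1 := fun i => by
      by_cases hi : i ∈ A
      · simpa [hi] using hxy i
      · simpa [hi] using hx i
    have hstep := multilinear_update_le hsub hbox j (a := x j + y j) (b := x j)
      (le_add_of_nonneg_right (hy j))
    have hunchanged : Function.update (A.piecewise (x + y) x) j (x j) = A.piecewise (x + y) x :=
      Function.update_eq_self_iff.2 (piecewise_eq_of_notMem _ _ _ hjA).symm
    rw [hunchanged, add_sub_cancel_left] at hstep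
    rw [piecewise_insert, Pi.add_apply, sum_insert hjA]
    linarith

end

theorem multilinear_add_le_general {G : Type*} [Fintype G] [DecidableEq G]
    (v : Finset G → ℝ) (hnn : ∀ S, 0 ≤ v S) (hsub : Submodular v)
    (x y : G → ℝ) (hx : ∀ j, 0 ≤ x j ∧ x j ≤ 1) (hy : ∀ j, 0 ≤ y j ∧ y j ≤ 1)
    (hxy : ∀ j, 0 ≤ x j + y j ∧ x j + y j ≤ 1) :
    multilinear v (x + y) ≤ multilinear v x + ∑ j : G, y j * v {j} := by
  calc multilinear v (x + y) = multilinear v (univ.piecewise (x + y) x) := by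
        rw [piecewise_univ]
    _ ≤ multilinear v x + ∑ j, y j * (v {j} - v ∅) :=
        multilinear_piecewise_le hsub hx (fun j => (hy j).1) hxy univ
    _ ≤ multilinear v x + ∑ j, y j * v {j} := by
        gcongr with j
        · exact (hy j).1
        · exact sub_le_self _ (hnn ∅)

/-- for a nonnegative monotone submodular `v` with multilinear extension `V`,
`V(x + y) ≤ V(x) + ∑_j y_j · v({j})`. -/
theorem multilinear_add_le {G : Type*} [Fintype G] [DecidableEq G]
    (v : Finset G → ℝ) (hnn : ∀ S, 0 ≤ v S) (hmono : Monotone v) (hsub : Submodular v)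
    (x y : G → ℝ) (hx : ∀ j, 0 ≤ x j ∧ x j ≤ 1) (hy : ∀ j, 0 ≤ y j ∧ y j ≤ 1)
    (hxy : ∀ j, 0 ≤ x j + y j ∧ x j + y j ≤ 1) :
    multilinear v (x + y) ≤ multilinear v x + ∑ j : G, y j * v {j} :=
  multilinear_add_le_general v hnn hsub x y hx hy hxy
end

section
/- Let A be a set of n agents, each with a nonnegative monotone submodular valuation v_i on a finite ground set G, and let V_i be the multilinear extension of v_i. Let H ⊆ G with |H| = n, let (H_i)_{i∈A} be a partition of H, and let y ∈ [0,1]^{A×G} satisfy y_{ij} = 0 for all j ∈ H and ∑_{i∈A} y_{ij} ≤ 1 for every j ∈ G∖H. Then there exists an injection σ : A → H such that (∏_{i∈A} V_i(y_i + 1_{σ(i)}))^{1/n} ≥ 3^{−1/3} · (∏_{i∈A} V_i(y_i + 1_{H_i}))^{1/n}. -/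
/-!
Give every agent with a nonempty part `H_i` an item `j ∈ H_i` maximizing `V_i(y_i + 1_j)`, and
match the agents with empty parts to the items of `H` left over. Because `y_i` vanishes on `H`,
`V_i(y_i + 1_Q) = E[v_i(R ∪ Q)]` for the random set `R` containing each `j` independently with
probability `y_ij`, so `Q ↦ V_i(y_i + 1_Q)` is monotone and submodular on subsets of `H`. Hence
agent `i` loses at most a factor `max(|H_i|, 1)`, and as `k³ ≤ 3^k` the product of these factors
is at most `3^{(∑ |H_i|)/3} = 3^{n/3}`.
-/

open Finset

/-- The indicator vector of a finite set `S`. -/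
def indVec {G : Type*} [DecidableEq G] (S : Finset G) : G → ℝ :=
  fun j => if j ∈ S then 1 else 0

section SetFunction

variable {G : Type*} [DecidableEq G] {f : Finset G → ℝ}

theorem Submodular.le_add_sum_sub (hf : Submodular f) (S : Finset G) :
    f S ≤ f ∅ + ∑ j ∈ S, (f {j} - f ∅) := by
  induction S using Finset.induction_on with
  | empty => simp
  | insert a S haS ih =>
    have h := hf {a} S
    rw [singleton_inter_of_notMem haS, singleton_union] at h
    rw [sum_insert haS]
    linarith

theorem Submodular.le_max_card_one_mul (hf : Submodular f) (hmono : Monotone f) (h0 : 0 ≤ f ∅)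
    {S : Finset G} {a : G} (ha : ∀ j ∈ S, f {j} ≤ f {a}) :
    f S ≤ (max #S 1 : ℕ) * f {a} := by
  rcases S.eq_empty_or_nonempty with rfl | hS
  · simpa using hmono (empty_subset {a})
  · have hcard : (1 : ℝ) ≤ #S := by exact_mod_cast hS.card_pos
    have hsum : ∑ j ∈ S, (f {j} - f ∅) ≤ #S * (f {a} - f ∅) := by
      calc ∑ j ∈ S, (f {j} - f ∅) ≤ ∑ _j ∈ S, (f {a} - f ∅) :=
            sum_le_sum fun j hj => sub_le_sub_right (ha j hj) (f ∅)
        _ = #S * (f {a} - f ∅) := by rw [sum_const, nsmul_eq_mul]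
    rw [max_eq_left hS.card_pos]
    nlinarith [hf.le_add_sum_sub S, mul_nonneg (sub_nonneg.mpr hcard) h0]

end SetFunction

section Multilinear

variable {G : Type*} [Fintype G] [DecidableEq G]

theorem multilinear_add_indVec_singleton (v : Finset G → ℝ) {z : G → ℝ} {a : G}
    (hza : z a = 0) :
    multilinear v (z + indVec {a}) = multilinear (fun T => v (insert a T)) z := by
  set x := z + indVec {a}
  have hxa : x a = 1 := by simp [x, indVec, hza]
  have hx : ∀ j ∈ (univ : Finset G).erase a, x j = z j := fun j hj => by
    simp [x, indVec, (mem_erase.mp hj).1]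
  have hweight : ∀ S ∈ ((univ : Finset G).erase a).powerset,
      (∏ j ∈ insert a S, x j) * ∏ j ∈ (insert a S)ᶜ, (1 - x j)
        = (∏ j ∈ S, z j) * ∏ j ∈ Sᶜ, (1 - z j) := by
    intro S hS
    have haS : a ∉ S := fun h => notMem_erase a _ (mem_powerset.mp hS h)
    rw [prod_insert haS, hxa, one_mul, prod_congr rfl fun j hj => hx j (mem_powerset.mp hS hj),
      ← mul_prod_erase Sᶜ (fun j => 1 - z j) (mem_compl.mpr haS), hza, sub_zero, one_mul,
      compl_insert]
    refine congrArg _ (prod_congr rfl fun j hj => ?_)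
    rw [hx j (mem_erase.mpr ⟨(mem_erase.mp hj).1, mem_univ j⟩)]
  unfold multilinear
  rw [← powerset_univ, ← insert_erase (mem_univ a), sum_powerset_insert (notMem_erase a _),
    sum_powerset_insert (notMem_erase a _)]
  -- Under `x` no weight sits on sets avoiding `a`; under `z` none on sets containing `a`.
  have hx_avoiding : ∀ S ∈ ((univ : Finset G).erase a).powerset,
      v S * ((∏ j ∈ S, x j) * ∏ j ∈ Sᶜ, (1 - x j)) = 0 := fun S hS =>
    mul_eq_zero_of_right _ <| mul_eq_zero_of_right _ <| prod_eq_zero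
      (mem_compl.mpr fun h => notMem_erase a _ (mem_powerset.mp hS h)) (by rw [hxa, sub_self])
  have hz_containing : ∀ S : Finset G,
      v (insert a (insert a S)) * ((∏ j ∈ insert a S, z j) * ∏ j ∈ (insert a S)ᶜ, (1 - z j))
        = 0 := fun S =>
    mul_eq_zero_of_right _ <| mul_eq_zero_of_left (prod_eq_zero (mem_insert_self a S) hza) _
  rw [sum_eq_zero hx_avoiding, zero_add, sum_eq_zero fun S _ => hz_containing S, add_zero]
  exact sum_congr rfl fun S hS => by rw [hweight S hS]

theorem multilinear_add_indVec (v : Finset G → ℝ) {z : G → ℝ} {Q : Finset G}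
    (hz : ∀ j ∈ Q, z j = 0) :
    multilinear v (z + indVec Q) = multilinear (fun T => v (T ∪ Q)) z := by
  induction Q using Finset.induction_on generalizing v with
  | empty =>
    have : indVec (∅ : Finset G) = 0 := funext fun j => if_neg (notMem_empty j)
    simp only [this, add_zero, union_empty]
  | insert a Q haQ ih =>
    have hsplit : z + indVec (insert a Q) = z + indVec Q + indVec {a} := by
      ext j; by_cases hjQ : j ∈ Q <;> by_cases hja : j = a <;> simp_all [indVec]
    have hza : (z + indVec Q) a = 0 := by simp [indVec, haQ, hz a (mem_insert_self a Q)]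
    rw [hsplit, multilinear_add_indVec_singleton v hza,
      ih _ fun j hj => hz j (mem_insert_of_mem hj)]
    simp only [union_insert]

theorem multilinear_add (u w : Finset G → ℝ) (z : G → ℝ) :
    multilinear (u + w) z = multilinear u z + multilinear w z := by
  simp only [multilinear, Pi.add_apply, add_mul, sum_add_distrib]

theorem multilinear_mono {u w : Finset G → ℝ} (huw : u ≤ w) {z : G → ℝ}
    (hz : ∀ j, 0 ≤ z j ∧ z j ≤ 1) : multilinear u z ≤ multilinear w z :=
  sum_le_sum fun S _ => mul_le_mul_of_nonneg_right (huw S) <|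
    mul_nonneg (prod_nonneg fun j _ => (hz j).1) (prod_nonneg fun j _ => sub_nonneg.mpr (hz j).2)

theorem multilinear_nonneg {v : Finset G → ℝ} (hv : ∀ S, 0 ≤ v S) {z : G → ℝ}
    (hz : ∀ j, 0 ≤ z j ∧ z j ≤ 1) : 0 ≤ multilinear v z := by
  calc 0 = multilinear 0 z := (sum_eq_zero fun _ _ => zero_mul _).symm
    _ ≤ multilinear v z := multilinear_mono hv hz

variable {v : Finset G → ℝ} {z : G → ℝ}

theorem Submodular.multilinear_union (hv : Submodular v) (hz : ∀ j, 0 ≤ z j ∧ z j ≤ 1) :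
    Submodular fun Q => multilinear (fun T => v (T ∪ Q)) z := by
  intro Q Q'
  rw [← multilinear_add, ← multilinear_add]
  refine multilinear_mono (fun T => ?_) hz
  have h := hv (T ∪ Q) (T ∪ Q')
  rwa [← union_inter_distrib_left, ← union_union_distrib_left] at h

theorem Monotone.multilinear_union (hv : Monotone v) (hz : ∀ j, 0 ≤ z j ∧ z j ≤ 1) :
    Monotone fun Q => multilinear (fun T => v (T ∪ Q)) z :=
  fun _ _ hQ => multilinear_mono (fun _ => hv (union_subset_union_right hQ)) hz

theorem multilinear_add_indVec_nonneg (hnn : ∀ S, 0 ≤ v S) (hz : ∀ j, 0 ≤ z j ∧ z j ≤ 1)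
    {S : Finset G} (hzS : ∀ j ∈ S, z j = 0) : 0 ≤ multilinear v (z + indVec S) := by
  rw [multilinear_add_indVec v hzS]
  exact multilinear_nonneg (fun _ => hnn _) hz

theorem multilinear_add_indVec_le_max_card_one_mul (hnn : ∀ S, 0 ≤ v S) (hmono : Monotone v)
    (hsub : Submodular v) (hz : ∀ j, 0 ≤ z j ∧ z j ≤ 1) {S : Finset G} {a : G}
    (hzS : ∀ j ∈ S, z j = 0) (hza : z a = 0)
    (hmax : ∀ j ∈ S, multilinear v (z + indVec {j}) ≤ multilinear v (z + indVec {a})) :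
    multilinear v (z + indVec S) ≤ (max #S 1 : ℕ) * multilinear v (z + indVec {a}) := by
  have hsingle : ∀ j, z j = 0 →
      multilinear v (z + indVec {j}) = multilinear (fun T => v (T ∪ {j})) z :=
    fun j hj => multilinear_add_indVec v (by simpa using hj)
  rw [multilinear_add_indVec v hzS, hsingle a hza]
  refine (hsub.multilinear_union hz).le_max_card_one_mul (hmono.multilinear_union hz)
    (multilinear_nonneg (fun _ => hnn _) hz) fun j hj => ?_
  rw [← hsingle j (hzS j hj), ← hsingle a hza]
  exact hmax j hj

end Multilinear

theorem exists_injective_forall_le_of_card_eq {A G : Type*} [Fintype A] {H : Finset G}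
    (hH : #H = Fintype.card A) {P : A → Finset G}
    (hdisj : Pairwise fun i i' => Disjoint (P i) (P i')) (hPH : ∀ i, P i ⊆ H) (f : A → G → ℝ) :
    ∃ σ : A → G, Function.Injective σ ∧ (∀ i, σ i ∈ H) ∧ ∀ i, ∀ j ∈ P i, f i j ≤ f i (σ i) := by
  have hbest : ∀ i, ∃ b, ∀ j ∈ P i, b ∈ P i ∧ f i j ≤ f i b := by
    intro i
    rcases (P i).eq_empty_or_nonempty with hP | hP
    · obtain ⟨b, -⟩ := card_pos.mp (hH ▸ Fintype.card_pos_iff.mpr ⟨i⟩)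
      exact ⟨b, by simp [hP]⟩
    · obtain ⟨b, hb, hmax⟩ := exists_max_image (P i) (f i) hP
      exact ⟨b, fun j hj => ⟨hb, hmax j hj⟩⟩
  choose τ hτ using hbest
  have hmaps : Set.MapsTo τ {i | τ i ∈ P i} H := fun i hi => hPH i hi
  have hinj : Set.InjOn τ {i | τ i ∈ P i} := fun i hi i' hi' he => by
    by_contra hne
    exact disjoint_left.mp (hdisj hne) hi (he ▸ hi')
  obtain ⟨g, hg⟩ := hmaps.exists_equiv_extend_of_card_eq hH.symm hinj
  refine ⟨fun i => g i, Subtype.val_injective.comp g.injective, fun i => (g i).2, fun i j hj => ?_⟩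
  simpa only [hg i (hτ i j hj).1] using (hτ i j hj).2

theorem cube_le_three_pow (k : ℕ) : k ^ 3 ≤ 3 ^ k := by
  induction k with
  | zero => norm_num
  | succ k ih =>
    rcases Nat.lt_or_ge k 3 with hk | hk
    · interval_cases k <;> norm_num
    · calc (k + 1) ^ 3 ≤ 3 * k ^ 3 := by nlinarith [sq_nonneg k]
        _ ≤ 3 * 3 ^ k := Nat.mul_le_mul_left 3 ih
        _ = 3 ^ (k + 1) := by ring

theorem max_one_pow_three_le_three_pow (k : ℕ) : max k 1 ^ 3 ≤ 3 ^ k := by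
  rcases Nat.eq_zero_or_pos k with rfl | hk
  · norm_num
  · rw [max_eq_left hk]
    exact cube_le_three_pow k

theorem rpow_one_div_le_of_pow_le {c b : ℝ} {d n : ℕ} (hc : 0 ≤ c) (hb : 0 ≤ b) (hd : d ≠ 0)
    (hn : n ≠ 0) (h : c ^ d ≤ b ^ n) : c ^ ((1 : ℝ) / n) ≤ b ^ ((1 : ℝ) / d) := by
  rw [← pow_le_pow_iff_left₀ (Real.rpow_nonneg hc _) (Real.rpow_nonneg hb _) (mul_ne_zero hn hd)]
  rw [pow_mul, pow_mul', one_div, one_div, Real.rpow_inv_natCast_pow hc hn,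
    Real.rpow_inv_natCast_pow hb hd]
  exact h

theorem three_rpow_neg_third_mul_rpow_le {p m c : ℝ} {n : ℕ} (hp : 0 ≤ p) (hm : 0 ≤ m)
    (hc : 0 ≤ c) (hpm : p ≤ c * m) (hc3 : c ^ 3 ≤ 3 ^ n) :
    (3 : ℝ) ^ (-(1 : ℝ) / 3) * p ^ ((1 : ℝ) / n) ≤ m ^ ((1 : ℝ) / n) := by
  have h3 : (3 : ℝ) ^ (-(1 : ℝ) / 3) * 3 ^ ((1 : ℝ) / 3) = 1 := by
    rw [← Real.rpow_add (by norm_num)]; norm_num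
  rcases Nat.eq_zero_or_pos n with rfl | hn
  · simp only [CharP.cast_eq_zero, div_zero, Real.rpow_zero, mul_one]
    exact Real.rpow_le_one_of_one_le_of_nonpos (by norm_num) (by norm_num)
  calc (3 : ℝ) ^ (-(1 : ℝ) / 3) * p ^ ((1 : ℝ) / n)
      ≤ (3 : ℝ) ^ (-(1 : ℝ) / 3) * (3 ^ ((1 : ℝ) / 3) * m ^ ((1 : ℝ) / n)) := by
        gcongr
        calc p ^ ((1 : ℝ) / n) ≤ (c * m) ^ ((1 : ℝ) / n) := by gcongr
          _ = c ^ ((1 : ℝ) / n) * m ^ ((1 : ℝ) / n) := Real.mul_rpow hc hm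
          _ ≤ 3 ^ ((1 : ℝ) / 3) * m ^ ((1 : ℝ) / n) := by
            gcongr
            exact_mod_cast rpow_one_div_le_of_pow_le hc (by norm_num) (by norm_num) hn.ne' hc3
    _ = m ^ ((1 : ℝ) / n) := by rw [← mul_assoc, h3, one_mul]

theorem matching_loses_cubeRootThree_general {A G : Type*} [Fintype A] [Fintype G]
    [DecidableEq G] (v : A → Finset G → ℝ)
    (hnn : ∀ i S, 0 ≤ v i S) (hmono : ∀ i, Monotone (v i)) (hsub : ∀ i, Submodular (v i))
    (H : Finset G) (hH : H.card = Fintype.card A)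
    (Hpart : A → Finset G)
    (hdisj : ∀ i i', i ≠ i' → Disjoint (Hpart i) (Hpart i'))
    (hcover : Finset.univ.biUnion Hpart = H)
    (y : A → G → ℝ) (hy01 : ∀ i j, 0 ≤ y i j ∧ y i j ≤ 1)
    (hyH : ∀ i, ∀ j ∈ H, y i j = 0) :
    ∃ σ : A → G, Function.Injective σ ∧ (∀ i, σ i ∈ H) ∧
      (∏ i : A, multilinear (v i) (y i + indVec {σ i})) ^ ((1 : ℝ) / Fintype.card A)
        ≥ (3 : ℝ) ^ (-(1 : ℝ) / 3) *
          (∏ i : A, multilinear (v i) (y i + indVec (Hpart i))) ^ ((1 : ℝ) / Fintype.card A) := by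
  have hHpart : ∀ i, Hpart i ⊆ H := fun i => hcover ▸ subset_biUnion_of_mem Hpart (mem_univ i)
  obtain ⟨σ, hσinj, hσH, hσmax⟩ := exists_injective_forall_le_of_card_eq hH
    (fun i i' => hdisj i i') hHpart fun i j => multilinear (v i) (y i + indVec {j})
  refine ⟨σ, hσinj, hσH, ?_⟩
  have hyHpart : ∀ i, ∀ j ∈ Hpart i, y i j = 0 := fun i j hj => hyH i j (hHpart i hj)
  have hyσ : ∀ i, ∀ j ∈ ({σ i} : Finset G), y i j = 0 := fun i j hj =>
    hyH i j (mem_singleton.mp hj ▸ hσH i)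
  have hagents : ∏ i, multilinear (v i) (y i + indVec (Hpart i))
      ≤ (∏ i, max #(Hpart i) 1 : ℕ) * ∏ i, multilinear (v i) (y i + indVec {σ i}) := by
    rw [Nat.cast_prod, ← prod_mul_distrib]
    exact prod_le_prod (fun i _ => multilinear_add_indVec_nonneg (hnn i) (hy01 i) (hyHpart i))
      fun i _ => multilinear_add_indVec_le_max_card_one_mul (hnn i) (hmono i) (hsub i) (hy01 i)
        (hyHpart i) (hyH i _ (hσH i)) (hσmax i)
  have hloss : (∏ i, max #(Hpart i) 1) ^ 3 ≤ 3 ^ Fintype.card A :=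
    calc (∏ i, max #(Hpart i) 1) ^ 3 ≤ ∏ i, 3 ^ #(Hpart i) := by
          rw [← prod_pow]; exact prod_le_prod' fun i _ => max_one_pow_three_le_three_pow _
      _ = 3 ^ Fintype.card A := by
          rw [prod_pow_eq_pow_sum, ← card_biUnion fun i _ i' _ => hdisj i i', hcover, hH]
  exact three_rpow_neg_third_mul_rpow_le
    (prod_nonneg fun i _ => multilinear_add_indVec_nonneg (hnn i) (hy01 i) (hyHpart i))
    (prod_nonneg fun i _ => multilinear_add_indVec_nonneg (hnn i) (hy01 i) (hyσ i))
    (Nat.cast_nonneg _) hagents (by exact_mod_cast hloss)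

/-- restricting the allocation of `H` to a matching loses at most a
factor `3^{1/3}` in the Nash Social Welfare objective of the mixed relaxation. -/
theorem matching_loses_cubeRootThree {A G : Type*} [Fintype A] [Fintype G] [DecidableEq A]
    [DecidableEq G] (v : A → Finset G → ℝ)
    (hnn : ∀ i S, 0 ≤ v i S) (hmono : ∀ i, Monotone (v i)) (hsub : ∀ i, Submodular (v i))
    (H : Finset G) (hH : H.card = Fintype.card A)
    (Hpart : A → Finset G)
    (hdisj : ∀ i i', i ≠ i' → Disjoint (Hpart i) (Hpart i'))
    (hcover : Finset.univ.biUnion Hpart = H)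
    (y : A → G → ℝ) (hy01 : ∀ i j, 0 ≤ y i j ∧ y i j ≤ 1)
    (hyH : ∀ i, ∀ j ∈ H, y i j = 0)
    (hfeas : ∀ j ∉ H, ∑ i : A, y i j ≤ 1) :
    ∃ σ : A → G, Function.Injective σ ∧ (∀ i, σ i ∈ H) ∧
      (∏ i : A, multilinear (v i) (y i + indVec {σ i})) ^ ((1 : ℝ) / Fintype.card A)
        ≥ (3 : ℝ) ^ (-(1 : ℝ) / 3) *
          (∏ i : A, multilinear (v i) (y i + indVec (Hpart i))) ^ ((1 : ℝ) / Fintype.card A) :=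
  matching_loses_cubeRootThree_general v hnn hmono hsub H hH Hpart hdisj hcover y hy01 hyH
end

section
/- Let n be a positive multiple of 3 and let G be the disjoint union of sets H and G' with |H| = |G'| = n. Let A consist of n agents: n/3 agents whose valuation is v(S) = |S ∩ H|, and 2n/3 agents whose valuation is v'(S) = min(|S|, 1). Then: (a) there exists a partition (T_i)_{i∈A} of G with ∏_{i∈A} v_i(T_i) = 3^{n/3}; and (b) for every y ∈ [0,1]^{A×G'} with ∑_{i∈A} y_{ij} ≤ 1 for each j ∈ G' and every injection σ : A → H, ∏_{i∈A} V_i(y_i + 1_{σ(i)}) ≤ 1, where V_i is the multilinear extension of the valuation v_i of agent i (with y_i extended by 0 on H). -/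
/-!
For (a), `tightAllocation` gives the good `j` of `H` to agent `j / 3` and the good `j` of `G'` to
agent `max j (n / 3)`: agent `i < n / 3` then holds exactly three goods of `H` and every other
agent `i` holds the good `i` of `G'`, so the values are `3` and `1`.

For (b), the multilinear extension at `x` is the expectation of `v` over the random set containing
each good `j` independently with probability `x j`. At `x = y_i + 1_{σ(i)}` this set contains
`σ(i)` and no other good of `H` almost surely, so both valuations are identically `1` on it.
-/

open Finset

section Multilinear

variable {G : Type*} [Fintype G] [DecidableEq G]

theorem sum_prod_mul_prod_compl_one_sub (x : G → ℝ) :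
    ∑ S : Finset G, (∏ j ∈ S, x j) * ∏ j ∈ Sᶜ, (1 - x j) = 1 := by
  have h := prod_add x (fun j => 1 - x j) univ
  simp only [add_sub_cancel, prod_const_one, powerset_univ] at h
  simpa only [compl_eq_univ_sdiff] using h.symm

theorem multilinear_const (c : ℝ) (x : G → ℝ) : multilinear (fun _ => c) x = c := by
  rw [multilinear, ← mul_sum, sum_prod_mul_prod_compl_one_sub, mul_one]

/-- The sets `S` excluded by the hypothesis have weight `0` in the multilinear extension. -/
theorem multilinear_eq_of_forall {v : Finset G → ℝ} {x : G → ℝ} {c : ℝ}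
    (hv : ∀ S : Finset G, (∀ j ∈ S, x j ≠ 0) → (∀ j ∉ S, x j ≠ 1) → v S = c) :
    multilinear v x = c := by
  rw [← multilinear_const c x]
  refine sum_congr rfl fun S _ => ?_
  by_cases hS : (∀ j ∈ S, x j ≠ 0) ∧ ∀ j ∉ S, x j ≠ 1
  · rw [hv S hS.1 hS.2]
  · obtain ⟨j, hjS, hj⟩ | ⟨j, hjS, hj⟩ := by
      simpa only [not_and_or, not_forall, not_not] using hS
    · rw [prod_eq_zero hjS hj, zero_mul, mul_zero, mul_zero]
    · rw [prod_eq_zero (mem_compl.2 hjS) (by rw [hj, sub_self]), mul_zero, mul_zero, mul_zero]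

theorem multilinear_card_inter_eq_one {H : Finset G} {s : G} {x : G → ℝ} (hs : s ∈ H)
    (hxs : x s = 1) (hx : ∀ j ∈ H, j ≠ s → x j = 0) :
    multilinear (fun S => ((S ∩ H).card : ℝ)) x = 1 := by
  refine multilinear_eq_of_forall fun S hS hSc => ?_
  have hsS : s ∈ S := by_contra fun h => hSc s h hxs
  have : S ∩ H = {s} := by
    refine eq_singleton_iff_unique_mem.2 ⟨mem_inter.2 ⟨hsS, hs⟩, fun j hj => ?_⟩
    obtain ⟨hjS, hjH⟩ := mem_inter.1 hj
    exact by_contra fun hjs => hS j hjS (hx j hjH hjs)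
  rw [this, card_singleton, Nat.cast_one]

theorem multilinear_min_card_one_eq_one {s : G} {x : G → ℝ} (hxs : x s = 1) :
    multilinear (fun S => ((min S.card 1 : ℕ) : ℝ)) x = 1 := by
  refine multilinear_eq_of_forall fun S _ hSc => ?_
  have hsS : s ∈ S := by_contra fun h => hSc s h hxs
  rw [min_eq_right (card_pos.2 ⟨s, hsS⟩), Nat.cast_one]

end Multilinear

theorem fibers_disjoint_and_biUnion_eq_univ {α ι : Type*} [Fintype α] [DecidableEq α]
    [Fintype ι] [DecidableEq ι] (f : α → ι) :
    (∀ i i', i ≠ i' → Disjoint ({a | f a = i} : Finset α) ({a | f a = i'} : Finset α)) ∧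
      univ.biUnion (fun i => ({a | f a = i} : Finset α)) = univ :=
  ⟨fun _ _ hii => disjoint_filter.2 fun _ _ h h' => hii (h.symm.trans h'),
    eq_univ_of_forall fun a => mem_biUnion.2 ⟨f a, mem_univ _, by simp⟩⟩

def tightAllocation (n : ℕ) : Fin n ⊕ Fin n → Fin n
  | .inl j => ⟨j / 3, by omega⟩
  | .inr j => ⟨max j (n / 3), by omega⟩

theorem tightAllocation_inl_eq_iff {n : ℕ} {i j : Fin n} :
    tightAllocation n (.inl j) = i ↔ (j : ℕ) / 3 = i :=
  Fin.ext_iff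

theorem tightAllocation_inr_self {n : ℕ} {i : Fin n} (hi : ¬ (i : ℕ) < n / 3) :
    tightAllocation n (.inr i) = i :=
  Fin.ext (max_eq_left (not_lt.1 hi))

theorem card_filter_div_three_eq {n : ℕ} {i : ℕ} (hi : i < n / 3) :
    ({j | (j : ℕ) / 3 = i} : Finset (Fin n)).card = 3 := by
  have : ({j | (j : ℕ) / 3 = i} : Finset (Fin n)).map Fin.valEmbedding =
      Ico (3 * i) (3 * i + 3) := by
    ext a
    simp only [mem_map, mem_filter_univ, Fin.valEmbedding_apply, mem_Ico]
    exact ⟨by rintro ⟨j, hj, rfl⟩; omega,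
      fun ha => ⟨⟨a, by omega⟩, show a / 3 = i by omega, rfl⟩⟩
  rw [← card_map Fin.valEmbedding, this, Nat.card_Ico, Nat.add_sub_cancel_left]

theorem card_tightAllocation_fiber_inter_inl {n : ℕ} {i : Fin n} (hi : (i : ℕ) < n / 3) :
    (({a | tightAllocation n a = i} : Finset _) ∩ univ.image Sum.inl).card = 3 := by
  have : ({a | tightAllocation n a = i} : Finset _) ∩ univ.image Sum.inl =
      ({j | (j : ℕ) / 3 = i} : Finset (Fin n)).map Function.Embedding.inl := by
    ext (j | j) <;> simp [tightAllocation_inl_eq_iff]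
  rw [this, card_map, card_filter_div_three_eq hi]

theorem value_tightAllocation_fiber {n : ℕ} {v : Fin n → Finset (Fin n ⊕ Fin n) → ℝ}
    (hv1 : ∀ i : Fin n, (i : ℕ) < n / 3 →
      ∀ S, v i S = ((S ∩ univ.image Sum.inl).card : ℝ))
    (hv2 : ∀ i : Fin n, ¬ (i : ℕ) < n / 3 → ∀ S, v i S = ((min S.card 1 : ℕ) : ℝ))
    (i : Fin n) :
    v i {a | tightAllocation n a = i} = if (i : ℕ) < n / 3 then 3 else 1 := by
  split_ifs with hi
  · rw [hv1 i hi, card_tightAllocation_fiber_inter_inl hi, Nat.cast_ofNat]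
  · have hne : ({a | tightAllocation n a = i} : Finset _).Nonempty :=
      ⟨.inr i, mem_filter_univ _ |>.2 (tightAllocation_inr_self hi)⟩
    rw [hv2 i hi, min_eq_right (card_pos.2 hne), Nat.cast_one]

theorem multilinear_eq_one_of_apply_inl {n : ℕ} {v : Fin n → Finset (Fin n ⊕ Fin n) → ℝ}
    (hv1 : ∀ i : Fin n, (i : ℕ) < n / 3 →
      ∀ S, v i S = ((S ∩ univ.image Sum.inl).card : ℝ))
    (hv2 : ∀ i : Fin n, ¬ (i : ℕ) < n / 3 → ∀ S, v i S = ((min S.card 1 : ℕ) : ℝ))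
    {x : Fin n ⊕ Fin n → ℝ} {s : Fin n} (hx : ∀ k, x (.inl k) = if k = s then 1 else 0)
    (i : Fin n) :
    multilinear (v i) x = 1 := by
  by_cases hi : (i : ℕ) < n / 3
  · rw [funext (hv1 i hi)]
    refine multilinear_card_inter_eq_one (mem_image_of_mem _ (mem_univ s)) (by simp [hx])
      fun j hj hjs => ?_
    obtain ⟨k, -, rfl⟩ := mem_image.1 hj
    simpa [hx] using hjs
  · rw [funext (hv2 i hi)]
    exact multilinear_min_card_one_eq_one (s := .inl s) (by simp [hx])

theorem tightness_of_cubeRootThree_general (n : ℕ)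
    (v : Fin n → Finset (Fin n ⊕ Fin n) → ℝ)
    (hv1 : ∀ i : Fin n, (i : ℕ) < n / 3 →
      ∀ S, v i S = ((S ∩ Finset.univ.image Sum.inl).card : ℝ))
    (hv2 : ∀ i : Fin n, ¬ (i : ℕ) < n / 3 →
      ∀ S, v i S = ((min S.card 1 : ℕ) : ℝ)) :
    (∃ T : Fin n → Finset (Fin n ⊕ Fin n),
        (∀ i i', i ≠ i' → Disjoint (T i) (T i')) ∧
        Finset.univ.biUnion T = Finset.univ ∧
        ∏ i : Fin n, v i (T i) = 3 ^ (n / 3)) ∧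
    (∀ y : Fin n → (Fin n ⊕ Fin n) → ℝ,
        (∀ i j, 0 ≤ y i j ∧ y i j ≤ 1) →
        (∀ i j, y i (Sum.inl j) = 0) →
        (∀ j : Fin n, ∑ i : Fin n, y i (Sum.inr j) ≤ 1) →
        ∀ σ : Fin n → Fin n, Function.Injective σ →
          ∏ i : Fin n, multilinear (v i) (y i + indVec {Sum.inl (σ i)}) ≤ 1) := by
  obtain ⟨hdisj, hcover⟩ := fibers_disjoint_and_biUnion_eq_univ (tightAllocation n)
  refine ⟨⟨_, hdisj, hcover, ?_⟩, fun y _ hyl _ σ _ => ?_⟩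
  · rw [prod_congr rfl fun i _ => value_tightAllocation_fiber hv1 hv2 i, prod_ite, prod_const,
      prod_const, one_pow, mul_one, Fin.card_filter_val_lt, min_eq_right (Nat.div_le_self n 3)]
  · exact (prod_eq_one fun i _ =>
      multilinear_eq_one_of_apply_inl hv1 hv2 (s := σ i) (fun k => by simp [indVec, hyl]) i).le

/-- tightness of the `3^{1/3}` factor. The ground set is
`G = H ⊕ G'` with `H` the left copy of `Fin n` and `G'` the right copy. The
first `n/3` agents have valuation `S ↦ |S ∩ H|`; the remaining `2n/3` agents
have valuation `S ↦ min(|S|,1)`.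
(a) Some partition of `G` achieves product of values `3^{n/3}`.
(b) Every fractional assignment of `G'` combined with a matching of `H` has
product of (multilinearly extended) values at most `1`. -/
theorem tightness_of_cubeRootThree (n : ℕ) (hn : 0 < n) (h3 : 3 ∣ n)
    (v : Fin n → Finset (Fin n ⊕ Fin n) → ℝ)
    (hv1 : ∀ i : Fin n, (i : ℕ) < n / 3 →
      ∀ S, v i S = ((S ∩ Finset.univ.image Sum.inl).card : ℝ))
    (hv2 : ∀ i : Fin n, ¬ (i : ℕ) < n / 3 →
      ∀ S, v i S = ((min S.card 1 : ℕ) : ℝ)) :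
    (∃ T : Fin n → Finset (Fin n ⊕ Fin n),
        (∀ i i', i ≠ i' → Disjoint (T i) (T i')) ∧
        Finset.univ.biUnion T = Finset.univ ∧
        ∏ i : Fin n, v i (T i) = 3 ^ (n / 3)) ∧
    (∀ y : Fin n → (Fin n ⊕ Fin n) → ℝ,
        (∀ i j, 0 ≤ y i j ∧ y i j ≤ 1) →
        (∀ i j, y i (Sum.inl j) = 0) →
        (∀ j : Fin n, ∑ i : Fin n, y i (Sum.inr j) ≤ 1) →
        ∀ σ : Fin n → Fin n, Function.Injective σ →
          ∏ i : Fin n, multilinear (v i) (y i + indVec {Sum.inl (σ i)}) ≤ 1) :=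
  tightness_of_cubeRootThree_general n v hv1 hv2
end

section
/- Let A' be a finite set of n agents, each with a nonnegative monotone submodular valuation v_i on a finite item set G' with v_i(G') > 0, and let V_i be the multilinear extension of v_i. Then there exists y ∈ [0,1]^{A'×G'} with ∑_{i∈A'} y_{ij} ≤ 1 for every j ∈ G' and V_i(y_i) > 0 for every i, such that for every y* ∈ [0,1]^{A'×G'} with ∑_{i∈A'} y*_{ij} ≤ 1 for every j ∈ G', one has (1/n) ∑_{i∈A'} V_i(y*_i)/V_i(y_i) ≤ e. -/
/-!
Take `y` maximising the Nash welfare `∏ᵢ Vᵢ(yᵢ)` over the compact convex set of fractional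
allocations; the maximum is positive because the uniform allocation already has positive welfare.
A multilinear extension `V` is affine in each coordinate, with slope `∂ⱼV` nonnegative when `v` is
monotone and antitone in `x` when `v` is submodular. Changing one coordinate at a time then gives
`V(z) ≤ V(y) + ∑ⱼ zⱼ ∂ⱼV(y)` and `∑ⱼ yⱼ ∂ⱼV(y) ≤ V(y)`, so
`Vᵢ(y*ᵢ) / Vᵢ(yᵢ) ≤ 2 + ⟨∇Vᵢ(yᵢ), y*ᵢ - yᵢ⟩ / Vᵢ(yᵢ)`. First-order optimality of the Nash welfare
in the feasible direction `y* - y` makes the sum of the last terms nonpositive, so the average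
ratio is at most `2 ≤ e`.
-/

open Finset

open Function

theorem sub_le_sum_of_update_piecewise_sub_le {ι β : Type*} [Fintype ι] [DecidableEq ι]
    {F : (ι → β) → ℝ} {x y : ι → β} {c : ι → ℝ}
    (hstep : ∀ s : Finset ι, ∀ j ∉ s,
      F (update (s.piecewise y x) j (y j)) - F (s.piecewise y x) ≤ c j) :
    F y - F x ≤ ∑ j, c j := by
  suffices h : ∀ s : Finset ι, F (s.piecewise y x) - F x ≤ ∑ j ∈ s, c j by
    simpa using h univ
  intro s
  induction s using Finset.induction_on with
  | empty => simp
  | insert j s hj ih =>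
    rw [piecewise_insert, sum_insert hj]
    linarith [hstep s j hj]

section MultilinearExtension

variable {G : Type*} [DecidableEq G]

/-- `multilinear (marginal v j)` is the partial derivative `∂V/∂x_j` of the multilinear
extension `V` of `v`. -/
def marginal (v : Finset G → ℝ) (j : G) (S : Finset G) : ℝ :=
  v (insert j S) - v (S.erase j)

theorem marginal_nonneg {v : Finset G → ℝ} (hv : Monotone v) (j : G) (S : Finset G) :
    0 ≤ marginal v j S :=
  sub_nonneg.2 (hv ((S.erase_subset j).trans (S.subset_insert j)))

theorem Submodular.antitone_marginal {v : Finset G → ℝ} (hv : Submodular v) (j : G) :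
    Antitone (marginal v j) := by
  intro S T hST
  have hinter : insert j S ∩ T.erase j = S.erase j := by
    ext a; have := @hST a; simp only [mem_inter, mem_insert, mem_erase]; tauto
  have hunion : insert j S ∪ T.erase j = insert j T := by
    ext a; have := @hST a; simp only [mem_union, mem_insert, mem_erase]; tauto
  have key := hv (insert j S) (T.erase j)
  rw [hinter, hunion] at key
  simp only [marginal]
  linarith

variable [Fintype G]

theorem multilinear_neg (v : Finset G → ℝ) (x : G → ℝ) :
    multilinear (-v) x = -multilinear v x := by
  simp only [multilinear, Pi.neg_apply, neg_mul, sum_neg_distrib]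

theorem multilinear_nonneg_s9 {v : Finset G → ℝ} (hv : 0 ≤ v) {x : G → ℝ} (hx : x ∈ Set.Icc 0 1) :
    0 ≤ multilinear v x :=
  sum_nonneg fun S _ => mul_nonneg (hv S) <| mul_nonneg
    (prod_nonneg fun j _ => hx.1 j) (prod_nonneg fun j _ => sub_nonneg.2 (hx.2 j))

theorem multilinear_pos {v : Finset G → ℝ} (hv : 0 ≤ v) (huniv : 0 < v univ)
    {x : G → ℝ} (hx : x ∈ Set.Icc 0 1) (hx₀ : ∀ j, 0 < x j) : 0 < multilinear v x := by
  refine sum_pos' (fun S _ => mul_nonneg (hv S) <| mul_nonneg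
    (prod_nonneg fun j _ => hx.1 j) (prod_nonneg fun j _ => sub_nonneg.2 (hx.2 j)))
    ⟨univ, mem_univ _, ?_⟩
  simpa using mul_pos huniv (prod_pos fun j _ => hx₀ j)

theorem multilinear_update_eq_sum (w : Finset G → ℝ) (x : G → ℝ) (j : G) (b : ℝ) :
    multilinear w (update x j b) =
      ∑ S ∈ (univ.erase j).powerset, ((1 - b) * w S + b * w (insert j S)) *
        ((∏ k ∈ S, x k) * ∏ k ∈ univ.erase j \ S, (1 - x k)) := by
  rw [multilinear, ← powerset_univ]
  conv_lhs => rw [← insert_erase (mem_univ j)]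
  rw [sum_powerset_insert (notMem_erase j univ), ← sum_add_distrib]
  refine sum_congr rfl fun S hS => ?_
  have hjS : j ∉ S := fun h => notMem_erase j univ (mem_powerset.1 hS h)
  have hcompl : (insert j S)ᶜ = univ.erase j \ S := by
    ext k; simp only [mem_compl, mem_insert, mem_sdiff, mem_erase, mem_univ]; tauto
  have hcompl' : Sᶜ = insert j (univ.erase j \ S) := by
    ext k; simp only [mem_compl, mem_insert, mem_sdiff, mem_erase, mem_univ]
    constructor
    · intro h; by_cases hk : k = j <;> tauto
    · rintro (rfl | ⟨-, h⟩) <;> assumption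
  have hjT : j ∉ univ.erase j \ S := fun h => (mem_erase.1 (mem_sdiff.1 h).1).1 rfl
  have hT : ∏ k ∈ univ.erase j \ S, (1 - update x j b k) = ∏ k ∈ univ.erase j \ S, (1 - x k) :=
    prod_congr rfl fun k hk => by rw [update_of_ne (ne_of_mem_of_not_mem hk hjT)]
  rw [hcompl, hcompl', prod_insert hjT, prod_insert hjS, prod_update_of_notMem hjS, update_self, hT]
  ring

theorem multilinear_update_s9 (v : Finset G → ℝ) (x : G → ℝ) (j : G) (b : ℝ) :
    multilinear v (update x j b) =
      multilinear v (update x j 0) + b * multilinear (marginal v j) x := by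
  have hmarginal : multilinear (marginal v j) x =
      ∑ S ∈ (univ.erase j).powerset, (v (insert j S) - v S) *
        ((∏ k ∈ S, x k) * ∏ k ∈ univ.erase j \ S, (1 - x k)) := by
    conv_lhs => rw [← update_eq_self j x]
    rw [multilinear_update_eq_sum]
    refine sum_congr rfl fun S hS => ?_
    have hjS : j ∉ S := fun h => notMem_erase j univ (mem_powerset.1 hS h)
    simp only [marginal, insert_idem, erase_insert_eq_erase, erase_eq_of_notMem hjS]
    ring
  rw [multilinear_update_eq_sum, multilinear_update_eq_sum, hmarginal, mul_sum,
    ← sum_add_distrib]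
  exact sum_congr rfl fun S _ => by ring

theorem multilinear_update_sub (v : Finset G → ℝ) {x : G → ℝ} {j : G} {a : ℝ} (hx : x j = a)
    (b : ℝ) :
    multilinear v (update x j b) - multilinear v x = (b - a) * multilinear (marginal v j) x := by
  have hxj := multilinear_update_s9 v x j (x j)
  rw [update_eq_self] at hxj
  rw [multilinear_update_s9, ← hx]
  linear_combination -hxj

theorem monotoneOn_multilinear {v : Finset G → ℝ} (hv : Monotone v) :
    MonotoneOn (multilinear v) (Set.Icc 0 1) := by
  intro y hy z hz hyz
  have hstep := sub_le_sum_of_update_piecewise_sub_le (F := multilinear v) (x := z) (y := y)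
    (c := 0) fun s j hj => by
      rw [multilinear_update_sub v (piecewise_eq_of_notMem s y z hj)]
      exact mul_nonpos_of_nonpos_of_nonneg (sub_nonpos.2 (hyz j)) <|
        multilinear_nonneg_s9 (marginal_nonneg hv j) (piecewise_mem_Icc_of_mem_of_mem s hy hz)
  simpa using hstep

theorem Submodular.antitoneOn_multilinear_marginal {v : Finset G → ℝ} (hv : Submodular v)
    (j : G) : AntitoneOn (multilinear (marginal v j)) (Set.Icc 0 1) := by
  intro y hy z hz hyz
  have := monotoneOn_multilinear (v := -marginal v j) (hv.antitone_marginal j).neg hy hz hyz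
  rwa [multilinear_neg, multilinear_neg, neg_le_neg_iff] at this

theorem multilinear_le_add_sum_mul_marginal {v : Finset G → ℝ} (hmono : Monotone v)
    (hsub : Submodular v) {y z : G → ℝ} (hy : y ∈ Set.Icc 0 1) (hz : z ∈ Set.Icc 0 1) :
    multilinear v z ≤ multilinear v y + ∑ j, z j * multilinear (marginal v j) y := by
  have hm : y ⊔ z ∈ Set.Icc 0 1 := ⟨le_sup_of_le_left hy.1, sup_le hy.2 hz.2⟩
  have hzm : multilinear v z ≤ multilinear v (y ⊔ z) :=
    monotoneOn_multilinear hmono hz hm le_sup_right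
  have hstep := sub_le_sum_of_update_piecewise_sub_le (F := multilinear v) (x := y) (y := y ⊔ z)
    (c := fun j => ((y ⊔ z) j - y j) * multilinear (marginal v j) y) fun s j hj => by
      rw [multilinear_update_sub v (piecewise_eq_of_notMem s (y ⊔ z) y hj)]
      refine mul_le_mul_of_nonneg_left ?_ (sub_nonneg.2 le_sup_left)
      exact hsub.antitoneOn_multilinear_marginal j hy (piecewise_mem_Icc_of_mem_of_mem s hm hy)
        (le_piecewise_of_le_of_le s le_sup_left le_rfl)
  have hsum : ∑ j, ((y ⊔ z) j - y j) * multilinear (marginal v j) y ≤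
      ∑ j, z j * multilinear (marginal v j) y :=
    sum_le_sum fun j _ => mul_le_mul_of_nonneg_right
      (sub_le_iff_le_add'.2 (max_le_add_of_nonneg (hy.1 j) (hz.1 j)))
      (multilinear_nonneg_s9 (marginal_nonneg hmono j) hy)
  linarith

theorem sum_mul_marginal_le_multilinear {v : Finset G → ℝ} (hnn : 0 ≤ v) (hsub : Submodular v)
    {y : G → ℝ} (hy : y ∈ Set.Icc 0 1) :
    ∑ j, y j * multilinear (marginal v j) y ≤ multilinear v y := by
  have h0 : (0 : G → ℝ) ∈ Set.Icc 0 1 := Set.left_mem_Icc.2 zero_le_one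
  have hstep := sub_le_sum_of_update_piecewise_sub_le (F := multilinear v) (x := y)
    (y := (0 : G → ℝ)) (c := fun j => -(y j * multilinear (marginal v j) y)) fun s j hj => by
      rw [multilinear_update_sub v (piecewise_eq_of_notMem s (0 : G → ℝ) y hj), Pi.zero_apply,
        zero_sub, neg_mul]
      refine neg_le_neg (mul_le_mul_of_nonneg_left ?_ (hy.1 j))
      exact hsub.antitoneOn_multilinear_marginal j (piecewise_mem_Icc_of_mem_of_mem s h0 hy) hy
        (piecewise_le_of_le_of_le s hy.1 le_rfl)
  rw [sum_neg_distrib] at hstep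
  linarith [multilinear_nonneg_s9 hnn h0]

theorem multilinear_div_le_two_add {v : Finset G → ℝ} (hnn : 0 ≤ v) (hmono : Monotone v)
    (hsub : Submodular v) {y z : G → ℝ} (hy : y ∈ Set.Icc 0 1) (hz : z ∈ Set.Icc 0 1)
    (hVy : 0 < multilinear v y) :
    multilinear v z / multilinear v y ≤
      2 + (∑ j, multilinear (marginal v j) y * (z j - y j)) / multilinear v y := by
  have hupper := multilinear_le_add_sum_mul_marginal hmono hsub hy hz
  have hself := sum_mul_marginal_le_multilinear hnn hsub hy
  have hsplit : ∑ j, multilinear (marginal v j) y * (z j - y j) =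
      ∑ j, z j * multilinear (marginal v j) y - ∑ j, y j * multilinear (marginal v j) y := by
    rw [← sum_sub_distrib]
    exact sum_congr rfl fun j _ => by ring
  rw [div_le_iff₀ hVy, add_mul, div_mul_cancel₀ _ hVy.ne', hsplit]
  linarith

theorem differentiable_multilinear (v : Finset G → ℝ) : Differentiable ℝ (multilinear v) := by
  unfold multilinear
  fun_prop

theorem hasDerivAt_multilinear_update (v : Finset G → ℝ) (x : G → ℝ) (j : G) (b : ℝ) :
    HasDerivAt (fun b => multilinear v (update x j b)) (multilinear (marginal v j) x) b := by
  rw [funext (multilinear_update_s9 v x j)]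
  simpa using ((hasDerivAt_id b).mul_const (multilinear (marginal v j) x)).const_add
    (multilinear v (update x j 0))

theorem hasFDerivAt_multilinear (v : Finset G → ℝ) (x : G → ℝ) :
    HasFDerivAt (multilinear v)
      (∑ j, multilinear (marginal v j) x •
        ContinuousLinearMap.proj (R := ℝ) (φ := fun _ : G => ℝ) j) x := by
  have hV := (differentiable_multilinear v x).hasFDerivAt
  have hpartial (j : G) :
      fderiv ℝ (multilinear v) x (Pi.single j 1) = multilinear (marginal v j) x := by
    have hcomp := (differentiable_multilinear v (update x j (x j))).hasFDerivAt.comp_hasDerivAt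
      (x j) (hasDerivAt_update x j (x j))
    rw [update_eq_self] at hcomp
    exact hcomp.unique (hasDerivAt_multilinear_update v x j (x j))
  refine hV.congr_fderiv (ContinuousLinearMap.ext fun d : G → ℝ => ?_)
  conv_lhs => rw [pi_eq_sum_univ' d]
  simp [map_sum, hpartial, mul_comm]

end MultilinearExtension

section Allocation

variable {A G : Type*} [Fintype A]

def feasibleAllocations (A G : Type*) [Fintype A] : Set (A → G → ℝ) :=
  Set.Icc 0 1 ∩ {y | ∀ j, ∑ i, y i j ≤ 1}

theorem isCompact_feasibleAllocations : IsCompact (feasibleAllocations A G) :=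
  isCompact_Icc.inter_right <| by
    simp only [Set.ofPred_forall]
    exact isClosed_iInter fun j => isClosed_le (by fun_prop) continuous_const

theorem convex_feasibleAllocations : Convex ℝ (feasibleAllocations A G) := by
  refine (convex_Icc 0 1).inter fun y hy z hz a b ha hb hab j => ?_
  simp only [Pi.add_apply, Pi.smul_apply, smul_eq_mul, sum_add_distrib, ← mul_sum]
  nlinarith [hy j, hz j]

theorem uniform_mem_feasibleAllocations :
    (fun _ _ => (Fintype.card A : ℝ)⁻¹) ∈ feasibleAllocations A G :=
  ⟨⟨fun _ _ => by positivity, fun _ _ => Nat.cast_inv_le_one _⟩, fun _ => by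
    simpa only [sum_const, card_univ, nsmul_eq_mul] using mul_inv_le_one⟩

variable [Fintype G] [DecidableEq G]

noncomputable def nashWelfare (v : A → Finset G → ℝ) (y : A → G → ℝ) : ℝ :=
  ∏ i, multilinear (v i) (y i)

theorem exists_isMaxOn_nashWelfare {v : A → Finset G → ℝ} (hnn : ∀ i, 0 ≤ v i)
    (hpos : ∀ i, 0 < v i univ) :
    ∃ y ∈ feasibleAllocations A G, IsMaxOn (nashWelfare v) (feasibleAllocations A G) y ∧
      ∀ i, 0 < multilinear (v i) (y i) := by
  have hcont : Continuous (nashWelfare v) :=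
    continuous_finsetProd _ fun i _ =>
      (differentiable_multilinear (v i)).continuous.comp (continuous_apply i)
  have hu := uniform_mem_feasibleAllocations (A := A) (G := G)
  have hu_pos : 0 < nashWelfare v fun _ _ => (Fintype.card A : ℝ)⁻¹ :=
    prod_pos fun i _ => multilinear_pos (hnn i) (hpos i) ⟨hu.1.1 i, hu.1.2 i⟩ fun _ =>
      inv_pos.2 (Nat.cast_pos.2 (Fintype.card_pos_iff.2 ⟨i⟩))
  obtain ⟨y, hy, hmax⟩ := isCompact_feasibleAllocations.exists_isMaxOn ⟨_, hu⟩ hcont.continuousOn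
  refine ⟨y, hy, hmax, fun i => (multilinear_nonneg_s9 (hnn i) ⟨hy.1.1 i, hy.1.2 i⟩).lt_of_ne' ?_⟩
  intro hzero
  exact (hu_pos.trans_le (hmax hu)).ne' (prod_eq_zero (mem_univ i) hzero)

theorem sum_div_nonpos_of_isMaxOn_nashWelfare {v : A → Finset G → ℝ} {y z : A → G → ℝ}
    (hy : y ∈ feasibleAllocations A G) (hmax : IsMaxOn (nashWelfare v) (feasibleAllocations A G) y)
    (hpos : ∀ i, 0 < multilinear (v i) (y i)) (hz : z ∈ feasibleAllocations A G) :
    ∑ i, (∑ j, multilinear (marginal (v i) j) (y i) * (z i j - y i j)) /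
      multilinear (v i) (y i) ≤ 0 := by
  classical
  have hderiv := HasFDerivAt.finsetProd (u := univ)
    (g := fun i (y : A → G → ℝ) => multilinear (v i) (y i)) fun i _ =>
    (hasFDerivAt_multilinear (v i) (y i)).comp (f := fun y : A → G → ℝ => y i) y
      (hasFDerivAt_apply i y)
  have hsegment : segment ℝ y (y + (z - y)) ⊆ feasibleAllocations A G := by
    simpa using convex_feasibleAllocations.segment_subset hy hz
  have hnonpos := hmax.localize.hasFDerivWithinAt_nonpos hderiv.hasFDerivWithinAt
    (mem_posTangentConeAt_of_segment_subset hsegment)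
  simp only [FunLike.coe_sum, FunLike.coe_smul, Finset.sum_apply, Pi.smul_apply,
    ContinuousLinearMap.coe_comp, comp_apply, ContinuousLinearMap.proj_apply,
    smul_eq_mul, Pi.sub_apply] at hnonpos
  have hP : 0 < nashWelfare v y := prod_pos fun i _ => hpos i
  calc ∑ i, (∑ j, multilinear (marginal (v i) j) (y i) * (z i j - y i j)) /
        multilinear (v i) (y i)
      = (∑ i, (∏ i' ∈ univ.erase i, multilinear (v i') (y i')) *
          ∑ j, multilinear (marginal (v i) j) (y i) * (z i j - y i j)) / nashWelfare v y := by
        rw [sum_div]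
        refine sum_congr rfl fun i _ => ?_
        rw [nashWelfare, ← prod_erase_mul univ _ (mem_univ i)]
        exact (mul_div_mul_left _ _ (prod_pos fun i' _ => hpos i').ne').symm
    _ ≤ 0 := div_nonpos_of_nonpos_of_nonneg hnonpos hP.le

end Allocation

/-- guarantee of the Iterated Continuous Greedy algorithm: there exists a
feasible fractional solution `y` such that every feasible `y*` satisfies
`(1/n) ∑_i V_i(y*_i)/V_i(y_i) ≤ e`. -/
theorem iteratedContinuousGreedy_guarantee {A G : Type*} [Fintype A] [Fintype G]
    [DecidableEq G] (v : A → Finset G → ℝ)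
    (hnn : ∀ i S, 0 ≤ v i S) (hmono : ∀ i, Monotone (v i)) (hsub : ∀ i, Submodular (v i))
    (hpos : ∀ i, 0 < v i Finset.univ) :
    ∃ y : A → G → ℝ,
      (∀ i j, 0 ≤ y i j ∧ y i j ≤ 1) ∧
      (∀ j : G, ∑ i : A, y i j ≤ 1) ∧
      (∀ i, 0 < multilinear (v i) (y i)) ∧
      ∀ ystar : A → G → ℝ,
        (∀ i j, 0 ≤ ystar i j ∧ ystar i j ≤ 1) →
        (∀ j : G, ∑ i : A, ystar i j ≤ 1) →
        (1 / (Fintype.card A : ℝ)) *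
            ∑ i : A, multilinear (v i) (ystar i) / multilinear (v i) (y i)
          ≤ Real.exp 1 := by
  obtain ⟨y, hy, hmax, hVpos⟩ := exists_isMaxOn_nashWelfare hnn hpos
  refine ⟨y, fun i j => ⟨hy.1.1 i j, hy.1.2 i j⟩, hy.2, hVpos, fun ystar hbox hcol => ?_⟩
  have hystar : ystar ∈ feasibleAllocations A G :=
    ⟨⟨fun i j => (hbox i j).1, fun i j => (hbox i j).2⟩, hcol⟩
  have hsum : ∑ i, multilinear (v i) (ystar i) / multilinear (v i) (y i) ≤
      2 * Fintype.card A := by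
    calc ∑ i, multilinear (v i) (ystar i) / multilinear (v i) (y i)
        ≤ ∑ i, (2 + (∑ j, multilinear (marginal (v i) j) (y i) * (ystar i j - y i j)) /
            multilinear (v i) (y i)) :=
          sum_le_sum fun i _ => multilinear_div_le_two_add (hnn i) (hmono i) (hsub i)
            ⟨hy.1.1 i, hy.1.2 i⟩ ⟨hystar.1.1 i, hystar.1.2 i⟩ (hVpos i)
      _ ≤ 2 * Fintype.card A := by
          rw [sum_add_distrib, sum_const, card_univ, nsmul_eq_mul, mul_comm]
          linarith [sum_div_nonpos_of_isMaxOn_nashWelfare hy hmax hVpos hystar]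
  calc 1 / (Fintype.card A : ℝ) * ∑ i, multilinear (v i) (ystar i) / multilinear (v i) (y i)
      ≤ 1 / (Fintype.card A : ℝ) * (2 * Fintype.card A) := by gcongr
    _ = 2 * ((Fintype.card A : ℝ) * (Fintype.card A : ℝ)⁻¹) := by ring
    _ ≤ 2 * 1 := by gcongr; exact mul_inv_le_one
    _ ≤ Real.exp 1 := by linarith [Real.add_one_le_exp 1]
end
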